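/- arXiv:2012.11269 — 2 statements merged into one kernel-verified Lean document; each statement's English description precedes it below -/
import Mathlib

section
/- If A is a set with a well-founded strict ordering, then the multiset extension of that ordering on finite multisets over A is well-founded. -/
/-- One replacement step of the Dershowitz–Manna multiset ordering: `M` is obtained
from `N` by removing one element `x` and adding a finite multiset `T` of elements that
are all strictly smaller (with respect to `r`) than `x`. -/
def DMStep {α : Type*} (r : α → α → Prop) (M N : Multiset α) : Prop :=
  ∃ (x : α) (T Z : Multiset α), N = x ::ₘ Z ∧ (∀ t ∈ T, r t x) ∧ M = Z + T

/-- The Dershowitz–Manna multiset ordering: finitely many replacement steps. -/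
def DMLT {α : Type*} (r : α → α → Prop) : Multiset α → Multiset α → Prop :=
  Relation.TransGen (DMStep r)

theorem DMStep.cutExpand {α : Type*} {r : α → α → Prop} {M N : Multiset α}
    (h : DMStep r M N) : Relation.CutExpand r M N := by
  obtain ⟨x, T, Z, rfl, hT, rfl⟩ := h
  refine ⟨T, x, hT, ?_⟩
  rw [Multiset.cons_add, ← Multiset.singleton_add, add_comm]

/-- Dershowitz–Manna: the multiset extension of a well-founded strict order on `A`
is well-founded on finite multisets over `A`. -/
theorem dmlt_wellFounded {α : Type*} (r : α → α → Prop) (hwf : WellFounded r) :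
    WellFounded (DMLT r) :=
  Subrelation.wf (Relation.TransGen.mono (fun _ _ => DMStep.cutExpand) _ _) hwf.cutExpand.transGen
end

section
/- For n ∈ ℕ, let G^{2ⁿ}(a,b) denote a directed green path of length 2ⁿ from a to b. Consider the rewriting relation generated by the grid rule: from edges R(x,x'), G(x,u), G(u,u') one may derive a fresh vertex z with edges R(u',z) and G(x',z), and the pins rule: from any vertex x derive fresh z, z' with R(x,z) and G(x,z'). Then starting from the green path of length 2ⁿ, the closure under these rules contains vertices x', y' and edges forming R-paths of length n from a to x' and from b to y', together with a green edge G(x',y'). -/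
/-- Halving lemma: from a green path of length `2*m` starting at `b 0`, using pins and grid,
construct a new green path `c` of length `m` with `R (b (2*i)) (c i)` for all `i ≤ m`. -/
theorem halving_lemma {V : Type*} (R G : V → V → Prop)
    (hpins : ∀ x : V, (∃ z, R x z) ∧ ∃ z', G x z')
    (hgrid : ∀ x x' u u' : V, R x x' → G x u → G u u' → ∃ z, R u' z ∧ G x' z)
    (m : ℕ) (b : ℕ → V) (hb : ∀ i, i < 2 * m → G (b i) (b (i + 1))) :
    ∃ c : ℕ → V, (∀ i, i ≤ m → R (b (2 * i)) (c i)) ∧ ∀ i, i < m → G (c i) (c (i + 1)) := by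
  induction m with
  | zero =>
    obtain ⟨z, hz⟩ := (hpins (b 0)).1
    exact ⟨fun _ => z, fun i hi => by interval_cases i; simpa using hz, fun i hi => by omega⟩
  | succ m ih =>
    obtain ⟨c, hcR, hcG⟩ := ih fun i hi => hb i (by omega)
    obtain ⟨z, hzR, hzG⟩ := hgrid (b (2 * m)) (c m) (b (2 * m + 1)) (b (2 * m + 2))
      (hcR m le_rfl) (hb (2 * m) (by omega)) (hb (2 * m + 1) (by omega))
    refine ⟨fun i => if i ≤ m then c i else z, fun i hi => ?_, fun i hi => ?_⟩
    · by_cases h : i ≤ m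
      · simp only [h, if_pos]; exact hcR i h
      · have : i = m + 1 := by omega
        subst this
        simp only [if_neg h]
        have : 2 * (m + 1) = 2 * m + 2 := by ring
        rw [this]; exact hzR
    · by_cases h : i < m
      · simp only [Nat.le_of_lt h, if_pos, Nat.succ_le_of_lt h]
        exact hcG i h
      · have hi' : i = m := by omega
        simp only [hi', le_rfl, if_pos, if_neg (by omega : ¬ m + 1 ≤ m)]
        exact hzG


/-- `RPath R n x y` : there is a directed `R`-path of length exactly `n` from `x` to `y`. -/
def RPath {V : Type*} (R : V → V → Prop) : ℕ → V → V → Prop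
  | 0, x, y => x = y
  | n + 1, x, y => ∃ z, R x z ∧ RPath R n z y

/-- In any structure with a red relation `R` and a green relation `G` that contains a green
path `a 0, a 1, …, a (2^n)` and is closed under the rules
(pins) `∀ x ∃ z z', R(x,z) ∧ G(x,z')` and
(grid) `R(x,x') ∧ G(x,u) ∧ G(u,u') → ∃ z, R(u',z) ∧ G(x',z)`,
there are `x'`, `y'` with `R`-paths of length `n` from `a 0` to `x'` and from `a (2^n)` to
`y'`, and a green edge from `x'` to `y'`. -/
theorem green_path_query_satisfied {V : Type*} (R G : V → V → Prop)
    (n : ℕ) (a : ℕ → V)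
    (hpath : ∀ i : ℕ, i < 2 ^ n → G (a i) (a (i + 1)))
    (hpins : ∀ x : V, (∃ z, R x z) ∧ ∃ z', G x z')
    (hgrid : ∀ x x' u u' : V, R x x' → G x u → G u u' → ∃ z, R u' z ∧ G x' z) :
    ∃ x' y' : V, RPath R n (a 0) x' ∧ RPath R n (a (2 ^ n)) y' ∧ G x' y' := by
  induction n generalizing a with
  | zero =>
    exact ⟨a 0, a 1, rfl, rfl, hpath 0 (by norm_num)⟩
  | succ n ih =>
    obtain ⟨c, hcR, hcG⟩ := halving_lemma R G hpins hgrid (2 ^ n) a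
      (fun i hi => hpath i (by rw [pow_succ]; omega))
    obtain ⟨x', y', hx', hy', hG⟩ := ih c hcG
    refine ⟨x', y', ⟨c 0, by simpa using hcR 0 (Nat.zero_le _), hx'⟩,
      ⟨c (2 ^ n), ?_, hy'⟩, hG⟩
    have h2 : 2 ^ (n + 1) = 2 * 2 ^ n := by ring
    rw [h2]
    exact hcR (2 ^ n) le_rfl
end
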